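/- Let a, b be norm-one quaternions and let ℍ*(a,b) be the algebra on ℍ with product x⊙y = a x b ȳ. Then ℍ*(a,b) satisfies the identity (x², x, x²) = 0 (i.e. (x²⊙x)⊙x² = x²⊙(x⊙x²) for all x ∈ ℍ, where x² = x⊙x) if and only if b ∈ {1,−1} (a being an arbitrary norm-one quaternion). -/

import Mathlib

set_option maxHeartbeats 1600000

/-- The product of the principal isotope `ℍ*(a,b)`: `x ⊙ y = a * x * b * ȳ`. -/
noncomputable def isoMul3 (a b x y : Quaternion ℝ) : Quaternion ℝ := a * x * b * star y

/-- A quaternion given by its four components. -/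
abbrev qmk (r i j k : ℝ) : Quaternion ℝ := QuaternionAlgebra.mk r i j k

/-- For norm-one quaternions `a, b`, the algebra `ℍ*(a,b)` satisfies the identity
`(x², x, x²) = 0` if and only if `b ∈ {1,-1}` (with `a` arbitrary). -/
theorem stmt_16 (a b : Quaternion ℝ) (ha : ‖a‖ = 1) (hb : ‖b‖ = 1) :
    (∀ x : Quaternion ℝ,
        isoMul3 a b (isoMul3 a b (isoMul3 a b x x) x) (isoMul3 a b x x)
          = isoMul3 a b (isoMul3 a b x x) (isoMul3 a b x (isoMul3 a b x x)))
      ↔ (b = 1 ∨ b = -1) := by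
  have hane : a ≠ 0 := by intro h; rw [h] at ha; simp at ha
  have hbne : b ≠ 0 := by intro h; rw [h] at hb; simp at hb
  constructor
  · intro H
    -- Step 1: the key consequence `D(x)` obtained by cancelling units.
    have keyD : ∀ x : Quaternion ℝ,
        a * (x * (b * (star x * (b * (star x * (b * x)))))) =
          x * (b * (star x * (b * (a * (x * (b * star x)))))) := by
      intro x
      rcases eq_or_ne x 0 with rfl | hx
      · simp
      have h := H x
      unfold isoMul3 at h
      simp only [star_mul, star_star] at h
      set w : Quaternion ℝ := star b * (star x * star a) with hw
      have hw0 : w ≠ 0 := mul_ne_zero (star_ne_zero.mpr hbne)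
        (mul_ne_zero (star_ne_zero.mpr hx) (star_ne_zero.mpr hane))
      have h2 : a * (a * ((a * (x * (b * (star x * (b * (star x * (b * x))))))) * w))
          = a * (a * ((x * (b * (star x * (b * (a * (x * (b * star x))))))) * w)) := by
        convert h using 1 <;> noncomm_ring
      replace h2 := mul_left_cancel₀ hane (mul_left_cancel₀ hane h2)
      exact mul_right_cancel₀ hw0 h2
    -- Step 2: `a` commutes with `(u*b)^2` for every imaginary `u`.
    have hK : ∀ u : Quaternion ℝ, u.re = 0 →
        a * ((u * b) * (u * b)) = ((u * b) * (u * b)) * a := by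
      intro u hu
      rcases eq_or_ne u 0 with rfl | hu0
      · simp
      have hsu : star u = -u := by ext <;> simp [hu]
      have hD := keyD u
      rw [hsu] at hD
      have hc0 : u * (b * u) ≠ 0 := mul_ne_zero hu0 (mul_ne_zero hbne hu0)
      have h3 : (a * ((u * b) * (u * b))) * (u * (b * u))
          = (((u * b) * (u * b)) * a) * (u * (b * u)) := by
        convert hD using 1 <;> noncomm_ring
      exact mul_right_cancel₀ hc0 h3
    -- It suffices to show the imaginary part of `b` vanishes.
    have hnb : b.re ^ 2 + b.imI ^ 2 + b.imJ ^ 2 + b.imK ^ 2 = 1 := by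
      have : Quaternion.normSq b = 1 := by
        rw [Quaternion.normSq_eq_norm_mul_self, hb]; norm_num
      rw [Quaternion.normSq_def'] at this; linarith
    suffices hbim : b.imI = 0 ∧ b.imJ = 0 ∧ b.imK = 0 by
      obtain ⟨h1, h2, h3⟩ := hbim
      have h4 : (b.re - 1) * (b.re + 1) = 0 := by
        linear_combination hnb + (-b.imI) * h1 + (-b.imJ) * h2 + (-b.imK) * h3
      rcases mul_eq_zero.mp h4 with h | h
      · left
        have h' : b.re = 1 := by linarith
        ext <;> simp [h', h1, h2, h3, Quaternion.re_one, Quaternion.imI_one, Quaternion.imJ_one, Quaternion.imK_one]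
      · right
        have h' : b.re = -1 := by linarith
        ext <;> simp [h', h1, h2, h3, Quaternion.re_one, Quaternion.imI_one, Quaternion.imJ_one, Quaternion.imK_one]
    by_cases hA : a.imI = 0 ∧ a.imJ = 0 ∧ a.imK = 0
    · -- `a` is real: use `D` directly at `1 + i` and `1 + j`.
      obtain ⟨hA1, hA2, hA3⟩ := hA
      have har : a = ((a.re : ℝ) : Quaternion ℝ) := by ext <;> simp [hA1, hA2, hA3]
      have hre0 : ((a.re : ℝ) : Quaternion ℝ) ≠ 0 := har ▸ hane
      have hmv : ∀ p q : Quaternion ℝ,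
          p * (((a.re : ℝ) : Quaternion ℝ) * q) = ((a.re : ℝ) : Quaternion ℝ) * (p * q) := by
        intro p q; rw [← mul_assoc, ← Quaternion.coe_commutes, mul_assoc]
      have hswap : ∀ x : Quaternion ℝ, x ≠ 0 →
          star x * (b * x) = x * (b * star x) := by
        intro x hx
        have hD := keyD x
        rw [har] at hD
        simp only [hmv] at hD
        replace hD := mul_left_cancel₀ hre0 hD
        replace hD := mul_left_cancel₀ hx hD
        replace hD := mul_left_cancel₀ hbne hD
        replace hD := mul_left_cancel₀ (star_ne_zero.mpr hx) hD
        exact mul_left_cancel₀ hbne hD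
      have hqi : (qmk 1 1 0 0 : Quaternion ℝ) ≠ 0 := by
        intro h; simpa [Quaternion.re_zero] using congrArg QuaternionAlgebra.re h
      have hqj : (qmk 1 0 1 0 : Quaternion ℝ) ≠ 0 := by
        intro h; simpa [Quaternion.re_zero] using congrArg QuaternionAlgebra.re h
      have hi := hswap (qmk 1 1 0 0) hqi
      have hj := hswap (qmk 1 0 1 0) hqj
      rw [Quaternion.ext_iff] at hi hj
      obtain ⟨-, hi1, hi2, hi3⟩ := hi
      obtain ⟨-, hj1, hj2, hj3⟩ := hj
      simp only [Quaternion.re_mul, Quaternion.imI_mul, Quaternion.imJ_mul,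
        Quaternion.imK_mul, Quaternion.re_star, Quaternion.imI_star, Quaternion.imJ_star,
        Quaternion.imK_star] at hi1 hi2 hi3 hj1 hj2 hj3
      refine ⟨by linear_combination hj3 / 4, by linear_combination (-1/4 : ℝ) * hi3,
        by linear_combination hi2 / 4⟩
    · -- `a` is not real.
      have hm0 : a.imI ^ 2 + a.imJ ^ 2 + a.imK ^ 2 ≠ 0 := by
        intro h
        exact hA ⟨by nlinarith [sq_nonneg a.imI, sq_nonneg a.imJ, sq_nonneg a.imK],
          by nlinarith [sq_nonneg a.imI, sq_nonneg a.imJ, sq_nonneg a.imK],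
          by nlinarith [sq_nonneg a.imI, sq_nonneg a.imJ, sq_nonneg a.imK]⟩
      set r : ℝ := (a.imI ^ 2 + a.imJ ^ 2 + a.imK ^ 2)⁻¹ with hrdef
      have hr : r * (a.imI ^ 2 + a.imJ ^ 2 + a.imK ^ 2) = 1 := inv_mul_cancel₀ hm0
      by_cases hn : b.imI ^ 2 + b.imJ ^ 2 + b.imK ^ 2 = 0
      · exact ⟨by nlinarith [sq_nonneg b.imI, sq_nonneg b.imJ, sq_nonneg b.imK],
          by nlinarith [sq_nonneg b.imI, sq_nonneg b.imJ, sq_nonneg b.imK],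
          by nlinarith [sq_nonneg b.imI, sq_nonneg b.imJ, sq_nonneg b.imK]⟩
      set t : ℝ := (b.imI ^ 2 + b.imJ ^ 2 + b.imK ^ 2)⁻¹ with htdef
      have ht : t * (b.imI ^ 2 + b.imJ ^ 2 + b.imK ^ 2) = 1 := inv_mul_cancel₀ hn
      have htmp := hK (qmk 0 1 0 0 : Quaternion ℝ) rfl
      rw [Quaternion.ext_iff] at htmp
      obtain ⟨-, hc11, hc12, hc13⟩ := htmp
      have htmp := hK (qmk 0 0 1 0 : Quaternion ℝ) rfl
      rw [Quaternion.ext_iff] at htmp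
      obtain ⟨-, hc21, hc22, hc23⟩ := htmp
      have htmp := hK (qmk 0 0 0 1 : Quaternion ℝ) rfl
      rw [Quaternion.ext_iff] at htmp
      obtain ⟨-, hc31, hc32, hc33⟩ := htmp
      have htmp := hK (qmk 0 b.imI b.imJ b.imK : Quaternion ℝ) rfl
      rw [Quaternion.ext_iff] at htmp
      obtain ⟨-, hcB1, hcB2, hcB3⟩ := htmp
      have htmp := hK (qmk 0 (b.imI+1) b.imJ b.imK : Quaternion ℝ) rfl
      rw [Quaternion.ext_iff] at htmp
      obtain ⟨-, hcB11', hcB12', hcB13'⟩ := htmp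
      have htmp := hK (qmk 0 b.imI (b.imJ+1) b.imK : Quaternion ℝ) rfl
      rw [Quaternion.ext_iff] at htmp
      obtain ⟨-, hcB21', hcB22', hcB23'⟩ := htmp
      have htmp := hK (qmk 0 b.imI b.imJ (b.imK+1) : Quaternion ℝ) rfl
      rw [Quaternion.ext_iff] at htmp
      obtain ⟨-, hcB31', hcB32', hcB33'⟩ := htmp
      simp only [Quaternion.re_mul, Quaternion.imI_mul, Quaternion.imJ_mul,
        Quaternion.imK_mul] at hc11 hc12 hc13 hc21 hc22 hc23 hc31 hc32 hc33 hcB1 hcB2 hcB3 hcB11' hcB12' hcB13' hcB21' hcB22' hcB23' hcB31' hcB32' hcB33'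
      by_cases hb0c : b.re = 0
      · -- `b` has zero real part
        have dz11 : (a.imK*b.imK + a.imJ*b.imJ) = 0 := by linear_combination ((-1)/4*t) * hcB11' + (t/4) * hc11 + (a.imK*b.imJ*b.imK*b.imK*t + a.imK*b.imJ*b.imJ*b.imJ*t + a.imK*b.imI*b.imJ*t + a.imK*b.imI*b.imI*b.imJ*t + (-1)*a.imJ*b.imK*b.imK*b.imK*t + (-1)*a.imJ*b.imJ*b.imJ*b.imK*t + (-1)*a.imJ*b.imI*b.imK*t + (-1)*a.imJ*b.imI*b.imI*b.imK*t) * hb0c + ((-1)*a.imK*b.imK + (-1)*a.imJ*b.imJ) * ht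
        have dz12 : ((-1)*a.imI*b.imJ) = 0 := by linear_combination ((-1)/4*t) * hcB12' + (t/4) * hc12 + ((-1)*a.imK*b.imK*b.imK*t + (-1)*a.imK*b.imJ*b.imJ*t + (-1)*a.imK*b.imI*b.imK*b.imK*t + (-1)*a.imK*b.imI*b.imJ*b.imJ*t + (-2)*a.imK*b.imI*b.imI*t + (-1)*a.imK*b.imI*b.imI*b.imI*t + a.imI*b.imK*b.imK*b.imK*t + a.imI*b.imJ*b.imJ*b.imK*t + a.imI*b.imI*b.imK*t + a.imI*b.imI*b.imI*b.imK*t) * hb0c + (a.imI*b.imJ) * ht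
        have dz13 : ((-1)*a.imI*b.imK) = 0 := by linear_combination ((-1)/4*t) * hcB13' + (t/4) * hc13 + (a.imJ*b.imK*b.imK*t + a.imJ*b.imJ*b.imJ*t + a.imJ*b.imI*b.imK*b.imK*t + a.imJ*b.imI*b.imJ*b.imJ*t + 2*a.imJ*b.imI*b.imI*t + a.imJ*b.imI*b.imI*b.imI*t + (-1)*a.imI*b.imJ*b.imK*b.imK*t + (-1)*a.imI*b.imJ*b.imJ*b.imJ*t + (-1)*a.imI*b.imI*b.imJ*t + (-1)*a.imI*b.imI*b.imI*b.imJ*t) * hb0c + (a.imI*b.imK) * ht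
        have dz21 : ((-1)*a.imJ*b.imI) = 0 := by linear_combination ((-1)/4*t) * hcB21' + (t/4) * hc21 + (a.imK*b.imK*b.imK*t + a.imK*b.imJ*b.imK*b.imK*t + 2*a.imK*b.imJ*b.imJ*t + a.imK*b.imJ*b.imJ*b.imJ*t + a.imK*b.imI*b.imI*t + a.imK*b.imI*b.imI*b.imJ*t + (-1)*a.imJ*b.imK*b.imK*b.imK*t + (-1)*a.imJ*b.imJ*b.imK*t + (-1)*a.imJ*b.imJ*b.imJ*b.imK*t + (-1)*a.imJ*b.imI*b.imI*b.imK*t) * hb0c + (a.imJ*b.imI) * ht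
        have dz22 : (a.imK*b.imK + a.imI*b.imI) = 0 := by linear_combination ((-1)/4*t) * hcB22' + (t/4) * hc22 + ((-1)*a.imK*b.imI*b.imK*b.imK*t + (-1)*a.imK*b.imI*b.imJ*t + (-1)*a.imK*b.imI*b.imJ*b.imJ*t + (-1)*a.imK*b.imI*b.imI*b.imI*t + a.imI*b.imK*b.imK*b.imK*t + a.imI*b.imJ*b.imK*t + a.imI*b.imJ*b.imJ*b.imK*t + a.imI*b.imI*b.imI*b.imK*t) * hb0c + ((-1)*a.imK*b.imK + (-1)*a.imI*b.imI) * ht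
        have dz23 : ((-1)*a.imJ*b.imK) = 0 := by linear_combination ((-1)/4*t) * hcB23' + (t/4) * hc23 + (a.imJ*b.imI*b.imK*b.imK*t + a.imJ*b.imI*b.imJ*t + a.imJ*b.imI*b.imJ*b.imJ*t + a.imJ*b.imI*b.imI*b.imI*t + (-1)*a.imI*b.imK*b.imK*t + (-1)*a.imI*b.imJ*b.imK*b.imK*t + (-2)*a.imI*b.imJ*b.imJ*t + (-1)*a.imI*b.imJ*b.imJ*b.imJ*t + (-1)*a.imI*b.imI*b.imI*t + (-1)*a.imI*b.imI*b.imI*b.imJ*t) * hb0c + (a.imJ*b.imK) * ht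
        have dz31 : ((-1)*a.imK*b.imI) = 0 := by linear_combination ((-1)/4*t) * hcB31' + (t/4) * hc31 + (a.imK*b.imJ*b.imK*t + a.imK*b.imJ*b.imK*b.imK*t + a.imK*b.imJ*b.imJ*b.imJ*t + a.imK*b.imI*b.imI*b.imJ*t + (-2)*a.imJ*b.imK*b.imK*t + (-1)*a.imJ*b.imK*b.imK*b.imK*t + (-1)*a.imJ*b.imJ*b.imJ*t + (-1)*a.imJ*b.imJ*b.imJ*b.imK*t + (-1)*a.imJ*b.imI*b.imI*t + (-1)*a.imJ*b.imI*b.imI*b.imK*t) * hb0c + (a.imK*b.imI) * ht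
        have dz32 : ((-1)*a.imK*b.imJ) = 0 := by linear_combination ((-1)/4*t) * hcB32' + (t/4) * hc32 + ((-1)*a.imK*b.imI*b.imK*t + (-1)*a.imK*b.imI*b.imK*b.imK*t + (-1)*a.imK*b.imI*b.imJ*b.imJ*t + (-1)*a.imK*b.imI*b.imI*b.imI*t + 2*a.imI*b.imK*b.imK*t + a.imI*b.imK*b.imK*b.imK*t + a.imI*b.imJ*b.imJ*t + a.imI*b.imJ*b.imJ*b.imK*t + a.imI*b.imI*b.imI*t + a.imI*b.imI*b.imI*b.imK*t) * hb0c + (a.imK*b.imJ) * ht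
        have dz33 : (a.imJ*b.imJ + a.imI*b.imI) = 0 := by linear_combination ((-1)/4*t) * hcB33' + (t/4) * hc33 + (a.imJ*b.imI*b.imK*t + a.imJ*b.imI*b.imK*b.imK*t + a.imJ*b.imI*b.imJ*b.imJ*t + a.imJ*b.imI*b.imI*b.imI*t + (-1)*a.imI*b.imJ*b.imK*t + (-1)*a.imI*b.imJ*b.imK*b.imK*t + (-1)*a.imI*b.imJ*b.imJ*b.imJ*t + (-1)*a.imI*b.imI*b.imI*b.imJ*t) * hb0c + ((-1)*a.imJ*b.imJ + (-1)*a.imI*b.imI) * ht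
        have q11 : a.imI*b.imI = 0 := by linear_combination (dz22 + dz33 - dz11)/2
        have q22 : a.imJ*b.imJ = 0 := by linear_combination (dz11 + dz33 - dz22)/2
        have q33 : a.imK*b.imK = 0 := by linear_combination (dz11 + dz22 - dz33)/2
        have q21 : a.imJ*b.imI = 0 := by linear_combination -dz21
        have q31 : a.imK*b.imI = 0 := by linear_combination -dz31
        have q12 : a.imI*b.imJ = 0 := by linear_combination -dz12
        have q32 : a.imK*b.imJ = 0 := by linear_combination -dz32
        have q13 : a.imI*b.imK = 0 := by linear_combination -dz13
        have q23 : a.imJ*b.imK = 0 := by linear_combination -dz23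
        refine ⟨?_, ?_, ?_⟩
        · linear_combination r*a.imI*q11 + r*a.imJ*q21 + r*a.imK*q31 + (-b.imI)*hr
        · linear_combination r*a.imI*q12 + r*a.imJ*q22 + r*a.imK*q32 + (-b.imJ)*hr
        · linear_combination r*a.imI*q13 + r*a.imJ*q23 + r*a.imK*q33 + (-b.imK)*hr
      · -- `b` has nonzero real part
        set s : ℝ := (b.re)⁻¹ with hsdef
        have hs : s * b.re = 1 := inv_mul_cancel₀ hb0c
        have cb1 : ((-1)*a.imK*b.imJ + a.imJ*b.imK) = 0 := by linear_combination ((-1)/4*t*s) * hcB1 + (a.imK*b.re*b.imJ*s + (-1)*a.imJ*b.re*b.imK*s) * ht + (a.imK*b.imJ + (-1)*a.imJ*b.imK) * hs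
        have cb2 : (a.imK*b.imI + (-1)*a.imI*b.imK) = 0 := by linear_combination ((-1)/4*t*s) * hcB2 + ((-1)*a.imK*b.re*b.imI*s + a.imI*b.re*b.imK*s) * ht + ((-1)*a.imK*b.imI + a.imI*b.imK) * hs
        have cb3 : ((-1)*a.imJ*b.imI + a.imI*b.imJ) = 0 := by linear_combination ((-1)/4*t*s) * hcB3 + (a.imJ*b.re*b.imI*s + (-1)*a.imI*b.re*b.imJ*s) * ht + (a.imJ*b.imI + (-1)*a.imI*b.imJ) * hs
        have dv11 : (a.imK*b.imK + a.imJ*b.imJ) = 0 := by linear_combination ((-1)/4*t) * hcB11' + (t/4) * hc11 + ((-1)*b.re*b.imK*b.imK*t + (-1)*b.re*b.imJ*b.imJ*t + (-1)*b.re*b.imI*t + (-1)*b.re*b.imI*b.imI*t) * cb1 + ((-1)*a.imK*b.imK + (-1)*a.imJ*b.imJ) * ht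
        have dv12 : (a.imK*b.re + (-1)*a.imI*b.imJ) = 0 := by linear_combination ((-1)/4*t) * hcB12' + (t/4) * hc12 + ((-1)*b.re*b.imK*b.imK*t + (-1)*b.re*b.imJ*b.imJ*t + (-1)*b.re*b.imI*t + (-1)*b.re*b.imI*b.imI*t) * cb2 + ((-1)*a.imK*b.re + a.imI*b.imJ) * ht
        have dv13 : ((-1)*a.imJ*b.re + (-1)*a.imI*b.imK) = 0 := by linear_combination ((-1)/4*t) * hcB13' + (t/4) * hc13 + ((-1)*b.re*b.imK*b.imK*t + (-1)*b.re*b.imJ*b.imJ*t + (-1)*b.re*b.imI*t + (-1)*b.re*b.imI*b.imI*t) * cb3 + (a.imJ*b.re + a.imI*b.imK) * ht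
        have dv21 : ((-1)*a.imK*b.re + (-1)*a.imJ*b.imI) = 0 := by linear_combination ((-1)/4*t) * hcB21' + (t/4) * hc21 + ((-1)*b.re*b.imK*b.imK*t + (-1)*b.re*b.imJ*t + (-1)*b.re*b.imJ*b.imJ*t + (-1)*b.re*b.imI*b.imI*t) * cb1 + (a.imK*b.re + a.imJ*b.imI) * ht
        have dv22 : (a.imK*b.imK + a.imI*b.imI) = 0 := by linear_combination ((-1)/4*t) * hcB22' + (t/4) * hc22 + ((-1)*b.re*b.imK*b.imK*t + (-1)*b.re*b.imJ*t + (-1)*b.re*b.imJ*b.imJ*t + (-1)*b.re*b.imI*b.imI*t) * cb2 + ((-1)*a.imK*b.imK + (-1)*a.imI*b.imI) * ht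
        have dv23 : ((-1)*a.imJ*b.imK + a.imI*b.re) = 0 := by linear_combination ((-1)/4*t) * hcB23' + (t/4) * hc23 + ((-1)*b.re*b.imK*b.imK*t + (-1)*b.re*b.imJ*t + (-1)*b.re*b.imJ*b.imJ*t + (-1)*b.re*b.imI*b.imI*t) * cb3 + (a.imJ*b.imK + (-1)*a.imI*b.re) * ht
        have dv31 : ((-1)*a.imK*b.imI + a.imJ*b.re) = 0 := by linear_combination ((-1)/4*t) * hcB31' + (t/4) * hc31 + ((-1)*b.re*b.imK*t + (-1)*b.re*b.imK*b.imK*t + (-1)*b.re*b.imJ*b.imJ*t + (-1)*b.re*b.imI*b.imI*t) * cb1 + (a.imK*b.imI + (-1)*a.imJ*b.re) * ht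
        have dv32 : ((-1)*a.imK*b.imJ + (-1)*a.imI*b.re) = 0 := by linear_combination ((-1)/4*t) * hcB32' + (t/4) * hc32 + ((-1)*b.re*b.imK*t + (-1)*b.re*b.imK*b.imK*t + (-1)*b.re*b.imJ*b.imJ*t + (-1)*b.re*b.imI*b.imI*t) * cb2 + (a.imK*b.imJ + a.imI*b.re) * ht
        have dv33 : (a.imJ*b.imJ + a.imI*b.imI) = 0 := by linear_combination ((-1)/4*t) * hcB33' + (t/4) * hc33 + ((-1)*b.re*b.imK*t + (-1)*b.re*b.imK*b.imK*t + (-1)*b.re*b.imJ*b.imJ*t + (-1)*b.re*b.imI*b.imI*t) * cb3 + ((-1)*a.imJ*b.imJ + (-1)*a.imI*b.imI) * ht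
        have hday : a.imI*b.imI + a.imJ*b.imJ + a.imK*b.imK = 0 := by linear_combination (dv11 + dv22 + dv33)/2
        refine ⟨?_, ?_, ?_⟩
        · linear_combination r*a.imI*hday + (-(r*a.imJ))*cb3 + (r*a.imK)*cb2 + (-b.imI)*hr
        · linear_combination r*a.imJ*hday + (-(r*a.imK))*cb1 + (r*a.imI)*cb3 + (-b.imJ)*hr
        · linear_combination r*a.imK*hday + (-(r*a.imI))*cb2 + (r*a.imJ)*cb1 + (-b.imK)*hr
  · rintro (rfl | rfl) <;> intro x
    · set n : Quaternion ℝ := x * star x with hn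
      have hyx' : star x * x = n := by
        rw [hn, Quaternion.self_mul_star, Quaternion.star_mul_self]
      have hcen : ∀ q : Quaternion ℝ, q * n = n * q := by
        intro q; rw [hn, Quaternion.self_mul_star, Quaternion.coe_commutes]
      have hxy : ∀ z, x * (star x * z) = n * z := by
        intro z; rw [← mul_assoc, hn]
      have hyx : ∀ z, star x * (x * z) = n * z := by
        intro z; rw [← mul_assoc, hyx']
      have hmove : ∀ q z : Quaternion ℝ, q * (n * z) = n * (q * z) := by
        intro q z; rw [← mul_assoc, hcen, mul_assoc]
      have hsn : star n = n := by rw [hn, star_mul, star_star]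
      simp only [isoMul3, star_mul, star_star, star_one, one_mul, mul_one, mul_assoc,
        hxy, hyx, hyx', hmove, hcen, hsn]
    · set n : Quaternion ℝ := x * star x with hn
      have hyx' : star x * x = n := by
        rw [hn, Quaternion.self_mul_star, Quaternion.star_mul_self]
      have hcen : ∀ q : Quaternion ℝ, q * n = n * q := by
        intro q; rw [hn, Quaternion.self_mul_star, Quaternion.coe_commutes]
      have hxy : ∀ z, x * (star x * z) = n * z := by
        intro z; rw [← mul_assoc, hn]
      have hyx : ∀ z, star x * (x * z) = n * z := by
        intro z; rw [← mul_assoc, hyx']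
      have hmove : ∀ q z : Quaternion ℝ, q * (n * z) = n * (q * z) := by
        intro q z; rw [← mul_assoc, hcen, mul_assoc]
      have hsn : star n = n := by rw [hn, star_mul, star_star]
      simp only [isoMul3, star_mul, star_star, star_one, one_mul, mul_one, mul_neg, neg_mul,
        mul_one, neg_neg, star_neg, mul_assoc, hxy, hyx, hyx', hmove, hcen, hsn]
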